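/- Define a Gaussian kernel on ℝⁿ×ℝⁿ by U_S(x,y) = det(C/(4π))^{1/2} exp(−S(x,y)) where S(x,y) = (1/4)⟨x,Ax⟩ − (1/2)⟨x,Cy⟩ + (1/4)⟨y,By⟩ with A, B real symmetric positive definite and C invertible such that the combined 2n×2n quadratic form has positive definite real part. Then the convolution (U_S ∘ U_{S'})(x,z) = ∫_{ℝⁿ} U_S(x,y) U_{S'}(y,z) dy is again a Gaussian kernel U_{S̃} with Ã = A − C(B+A')⁻¹Cᵀ, B̃ = B' − C'ᵀ(B+A')⁻¹C', C̃ = C(B+A')⁻¹C'. -/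

import Mathlib

open Matrix MeasureTheory Real

/-!
As a function of the middle variable `y`, the product `U_S(x,y) U_{S'}(y,z)` is a constant times
`exp (-¼⟨y, (B + A') y⟩ + ⟨y, w⟩)` with `w = ½ (Cᵀx + C'z)`. Shifting `y` by `2 (B + A')⁻¹ w`
completes the square, and the centred Gaussian integral `∫ exp (-¼⟨y, M y⟩) = √((4π)ⁿ / det M)`
follows from the standard one by writing `M = SᵀS` and substituting `v = S y`. The term
`⟨w, (B + A')⁻¹ w⟩` produces the new quadratic form, and the normalisations multiply correctly
because `det C̃ = det C · det C' / det (B + A')`.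
-/

/-- The quadratic pairing `⟨x, M y⟩ = ∑ᵢⱼ xᵢ Mᵢⱼ yⱼ`. -/
def quadPair (n : ℕ) (M : Matrix (Fin n) (Fin n) ℝ) (x y : Fin n → ℝ) : ℝ :=
  ∑ i, ∑ j, x i * M i j * y j

/-- The Gaussian kernel `U_S(x,y) = det(C/(4π))^{1/2} exp(−S(x,y))` with
`S(x,y) = (1/4)⟨x,Ax⟩ − (1/2)⟨x,Cy⟩ + (1/4)⟨y,By⟩`. -/
noncomputable def gaussKer (n : ℕ) (A B C : Matrix (Fin n) (Fin n) ℝ)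
    (x y : Fin n → ℝ) : ℝ :=
  Real.sqrt (|C.det| / (4 * π) ^ n) *
    Real.exp (-((1 / 4) * quadPair n A x x - (1 / 2) * quadPair n C x y
      + (1 / 4) * quadPair n B y y))

theorem Real.sqrt_pow_of_nonneg {a : ℝ} (ha : 0 ≤ a) (n : ℕ) : √(a ^ n) = √a ^ n := by
  rw [← Real.sqrt_sq (pow_nonneg (Real.sqrt_nonneg a) n), ← pow_mul, mul_comm, pow_mul,
    Real.sq_sqrt ha]

namespace Matrix

variable {ι : Type*} [Fintype ι]

theorem IsSymm.dotProduct_mulVec_comm {M : Matrix ι ι ℝ} (hM : M.IsSymm) (u v : ι → ℝ) :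
    u ⬝ᵥ M *ᵥ v = v ⬝ᵥ M *ᵥ u := by
  rw [dotProduct_mulVec, ← mulVec_transpose, hM.eq, dotProduct_comm]

theorem transpose_mulVec_dotProduct_mulVec_mulVec (P Q R : Matrix ι ι ℝ) (u v : ι → ℝ) :
    Pᵀ *ᵥ u ⬝ᵥ Q *ᵥ R *ᵥ v = u ⬝ᵥ (P * Q * R) *ᵥ v := by
  rw [← vecMul_transpose, transpose_transpose, ← dotProduct_mulVec, mulVec_mulVec, mulVec_mulVec,
    mul_assoc]

theorem half_smul_add_dotProduct_mulVec {M : Matrix ι ι ℝ} (hM : M.IsSymm)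
    (C C' : Matrix ι ι ℝ) (x z : ι → ℝ) :
    (1 / 2 : ℝ) • (Cᵀ *ᵥ x + C' *ᵥ z) ⬝ᵥ M *ᵥ (1 / 2 : ℝ) • (Cᵀ *ᵥ x + C' *ᵥ z)
      = 1 / 4 * (x ⬝ᵥ (C * M * Cᵀ) *ᵥ x) + 1 / 2 * (x ⬝ᵥ (C * M * C') *ᵥ z)
        + 1 / 4 * (z ⬝ᵥ (C'ᵀ * M * C') *ᵥ z) := by
  have hzx : C' *ᵥ z ⬝ᵥ M *ᵥ Cᵀ *ᵥ x = x ⬝ᵥ (C * M * C') *ᵥ z := by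
    rw [hM.dotProduct_mulVec_comm, transpose_mulVec_dotProduct_mulVec_mulVec]
  have hzz : C' *ᵥ z ⬝ᵥ M *ᵥ C' *ᵥ z = z ⬝ᵥ (C'ᵀ * M * C') *ᵥ z := by
    rw [← transpose_mulVec_dotProduct_mulVec_mulVec, transpose_transpose]
  simp only [mulVec_smul, mulVec_add, smul_dotProduct, dotProduct_smul, add_dotProduct,
    dotProduct_add, smul_eq_mul, hzx, hzz, transpose_mulVec_dotProduct_mulVec_mulVec]
  ring

variable [DecidableEq ι]

theorem sqrt_abs_det_mul_inv_mul_div {M : Matrix ι ι ℝ} (hM : 0 < M.det)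
    (C C' : Matrix ι ι ℝ) {c : ℝ} (hc : 0 < c) :
    √(|(C * M⁻¹ * C').det| / c) = √(|C.det| / c) * √(|C'.det| / c) * √(c / M.det) := by
  rw [← Real.sqrt_mul (by positivity), ← Real.sqrt_mul (by positivity), det_mul, det_mul,
    det_nonsing_inv, Ring.inverse_eq_inv', abs_mul, abs_mul, abs_inv, abs_of_pos hM]
  congr 1
  field_simp

theorem integral_comp_mulVec {E : Type*} [NormedAddCommGroup E] [NormedSpace ℝ E]
    {S : Matrix ι ι ℝ} (hS : S.det ≠ 0) (f : (ι → ℝ) → E) :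
    ∫ y, f (S *ᵥ y) = |S.det|⁻¹ • ∫ v, f v := by
  have hemb : MeasurableEmbedding (toLin' S) :=
    (LinearMap.isClosedEmbedding_of_injective (LinearMap.ker_eq_bot.mpr
      (mulVec_injective_of_isUnit ((isUnit_iff_isUnit_det S).mpr hS.isUnit)))).measurableEmbedding
  change ∫ y, f (toLin' S y) = _
  rw [← hemb.integral_map, Real.map_matrix_volume_pi_eq_smul_volume_pi hS, integral_smul_measure,
    ENNReal.toReal_ofReal (abs_nonneg _), abs_inv]

end Matrix

section GaussianIntegral

variable {ι : Type*} [Fintype ι]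

theorem integral_exp_neg_quarter_dotProduct_self :
    ∫ v : ι → ℝ, exp (-(1 / 4 * (v ⬝ᵥ v))) = √(4 * π) ^ Fintype.card ι := by
  have hprod (v : ι → ℝ) : exp (-(1 / 4 * (v ⬝ᵥ v))) = ∏ i, exp (-(1 / 4) * v i ^ 2) := by
    simp only [← Real.exp_sum, dotProduct, Finset.mul_sum, ← Finset.sum_neg_distrib, sq, neg_mul]
  have hline : ∫ t : ℝ, exp (-(1 / 4) * t ^ 2) = √(4 * π) := by
    rw [integral_gaussian]; congr 1; field_simp
  simp_rw [hprod]
  rw [integral_fintype_prod_volume_eq_pow (fun t => exp (-(1 / 4) * t ^ 2)), hline]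

variable [DecidableEq ι]

open scoped MatrixOrder in
theorem integral_exp_neg_quarter_dotProduct_mulVec {M : Matrix ι ι ℝ} (hM : M.PosDef) :
    ∫ y : ι → ℝ, exp (-(1 / 4 * (y ⬝ᵥ M *ᵥ y))) = √((4 * π) ^ Fintype.card ι / M.det) := by
  obtain ⟨S, hS, rfl⟩ :=
    CStarAlgebra.isStrictlyPositive_iff_eq_star_mul_self.mp hM.isStrictlyPositive
  have hdetS : S.det ≠ 0 := ((isUnit_iff_isUnit_det S).mp hS).ne_zero
  have hquad (y : ι → ℝ) : y ⬝ᵥ (star S * S) *ᵥ y = S *ᵥ y ⬝ᵥ S *ᵥ y := by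
    rw [← mulVec_mulVec, star_eq_conjTranspose, conjTranspose_eq_transpose_of_trivial,
      dotProduct_mulVec, vecMul_transpose]
  have hdet : (star S * S).det = |S.det| ^ 2 := by
    rw [det_mul, star_eq_conjTranspose, conjTranspose_eq_transpose_of_trivial, det_transpose,
      sq_abs, sq]
  simp_rw [hquad]
  rw [integral_comp_mulVec hdetS (fun v => exp (-(1 / 4 * (v ⬝ᵥ v)))),
    integral_exp_neg_quarter_dotProduct_self, hdet, Real.sqrt_div' _ (by positivity),
    Real.sqrt_sq (abs_nonneg _), smul_eq_mul, inv_mul_eq_div,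
    Real.sqrt_pow_of_nonneg (by positivity)]

theorem quarter_dotProduct_mulVec_add_smul_inv_mulVec {M : Matrix ι ι ℝ} (hMs : M.IsSymm)
    (hM : IsUnit M.det) (w y : ι → ℝ) :
    -(1 / 4 * ((y + (2 : ℝ) • M⁻¹ *ᵥ w) ⬝ᵥ M *ᵥ (y + (2 : ℝ) • M⁻¹ *ᵥ w)))
        + (y + (2 : ℝ) • M⁻¹ *ᵥ w) ⬝ᵥ w
      = -(1 / 4 * (y ⬝ᵥ M *ᵥ y)) + w ⬝ᵥ M⁻¹ *ᵥ w := by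
  have hMa : M *ᵥ M⁻¹ *ᵥ w = w := by rw [mulVec_mulVec, mul_nonsing_inv _ hM, one_mulVec]
  have hcross : M⁻¹ *ᵥ w ⬝ᵥ M *ᵥ y = y ⬝ᵥ w := by
    rw [hMs.dotProduct_mulVec_comm, hMa]
  simp only [mulVec_add, mulVec_smul, hMa, dotProduct_add, add_dotProduct, smul_dotProduct,
    dotProduct_smul, hcross, smul_eq_mul, dotProduct_comm (M⁻¹ *ᵥ w) w]
  ring

theorem integral_exp_neg_quarter_dotProduct_mulVec_add {M : Matrix ι ι ℝ} (hM : M.PosDef)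
    (w : ι → ℝ) :
    ∫ y : ι → ℝ, exp (-(1 / 4 * (y ⬝ᵥ M *ᵥ y)) + y ⬝ᵥ w)
      = √((4 * π) ^ Fintype.card ι / M.det) * exp (w ⬝ᵥ M⁻¹ *ᵥ w) := by
  have hMs : M.IsSymm := isHermitian_iff_isSymm.mp hM.isHermitian
  calc ∫ y : ι → ℝ, exp (-(1 / 4 * (y ⬝ᵥ M *ᵥ y)) + y ⬝ᵥ w)
      = ∫ y : ι → ℝ, exp (-(1 / 4 * ((y + (2 : ℝ) • M⁻¹ *ᵥ w) ⬝ᵥ M *ᵥ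
          (y + (2 : ℝ) • M⁻¹ *ᵥ w))) + (y + (2 : ℝ) • M⁻¹ *ᵥ w) ⬝ᵥ w) :=
        (integral_add_right_eq_self (fun y => exp (-(1 / 4 * (y ⬝ᵥ M *ᵥ y)) + y ⬝ᵥ w))
          ((2 : ℝ) • M⁻¹ *ᵥ w)).symm
    _ = ∫ y : ι → ℝ, exp (-(1 / 4 * (y ⬝ᵥ M *ᵥ y))) * exp (w ⬝ᵥ M⁻¹ *ᵥ w) := by
        simp_rw [quarter_dotProduct_mulVec_add_smul_inv_mulVec hMs hM.det_pos.ne'.isUnit,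
          exp_add]
    _ = √((4 * π) ^ Fintype.card ι / M.det) * exp (w ⬝ᵥ M⁻¹ *ᵥ w) := by
        rw [integral_mul_const, integral_exp_neg_quarter_dotProduct_mulVec hM]

end GaussianIntegral

theorem quadPair_eq_dotProduct_mulVec (n : ℕ) (M : Matrix (Fin n) (Fin n) ℝ) (x y : Fin n → ℝ) :
    quadPair n M x y = x ⬝ᵥ M *ᵥ y := by
  simp [quadPair, dotProduct, mulVec, Finset.mul_sum, mul_assoc]

theorem gaussKer_mul_gaussKer (n : ℕ) (A B C A' B' C' : Matrix (Fin n) (Fin n) ℝ)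
    (x y z : Fin n → ℝ) :
    gaussKer n A B C x y * gaussKer n A' B' C' y z
      = √(|C.det| / (4 * π) ^ n) * √(|C'.det| / (4 * π) ^ n)
          * exp (-(1 / 4 * (x ⬝ᵥ A *ᵥ x) + 1 / 4 * (z ⬝ᵥ B' *ᵥ z)))
        * exp (-(1 / 4 * (y ⬝ᵥ (B + A') *ᵥ y)) + y ⬝ᵥ (1 / 2 : ℝ) • (Cᵀ *ᵥ x + C' *ᵥ z)) := by
  simp only [gaussKer, quadPair_eq_dotProduct_mulVec]
  rw [mul_mul_mul_comm, ← exp_add, mul_assoc (_ * _), ← exp_add]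
  congr 2
  simp only [add_mulVec, dotProduct_add, dotProduct_smul, smul_eq_mul,
    dotProduct_mulVec y Cᵀ x, vecMul_transpose, dotProduct_comm _ x]
  ring

theorem gaussKer_convolution_general
    (n : ℕ) (A B C A' B' C' : Matrix (Fin n) (Fin n) ℝ)
    (hB : B.PosDef) (hA' : A'.PosDef) :
    ∀ x z : Fin n → ℝ,
      (∫ y : Fin n → ℝ, gaussKer n A B C x y * gaussKer n A' B' C' y z)
        = gaussKer n (A - C * (B + A')⁻¹ * Cᵀ) (B' - C'ᵀ * (B + A')⁻¹ * C')
            (C * (B + A')⁻¹ * C') x z := by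
  intro x z
  have hM : (B + A').PosDef := hB.add hA'
  have hMinv : (B + A')⁻¹.IsSymm := (isHermitian_iff_isSymm.mp hM.isHermitian).inv
  simp_rw [gaussKer_mul_gaussKer]
  rw [integral_const_mul, integral_exp_neg_quarter_dotProduct_mulVec_add hM, Fintype.card_fin,
    half_smul_add_dotProduct_mulVec hMinv, mul_mul_mul_comm, ← exp_add, gaussKer,
    sqrt_abs_det_mul_inv_mul_div hM.det_pos C C' (by positivity)]
  congr 2
  simp only [quadPair_eq_dotProduct_mulVec, sub_mulVec, dotProduct_sub]
  ring

/-- The convolution of two Gaussian kernels is again a Gaussian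
kernel, with `Ã = A − C(B+A')⁻¹Cᵀ`, `B̃ = B' − C'ᵀ(B+A')⁻¹C'`, `C̃ = C(B+A')⁻¹C'`. -/
theorem gaussKer_convolution
    (n : ℕ) (A B C A' B' C' : Matrix (Fin n) (Fin n) ℝ)
    (hA : A.PosDef) (hB : B.PosDef) (hA' : A'.PosDef) (hB' : B'.PosDef)
    (hC : IsUnit C.det) (hC' : IsUnit C'.det)
    (hpos : (Matrix.fromBlocks A (-C) (-Cᵀ) B).PosDef)
    (hpos' : (Matrix.fromBlocks A' (-C') (-C'ᵀ) B').PosDef) :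
    ∀ x z : Fin n → ℝ,
      (∫ y : Fin n → ℝ, gaussKer n A B C x y * gaussKer n A' B' C' y z)
        = gaussKer n (A - C * (B + A')⁻¹ * Cᵀ) (B' - C'ᵀ * (B + A')⁻¹ * C')
            (C * (B + A')⁻¹ * C') x z :=
  gaussKer_convolution_general n A B C A' B' C' hB hA'
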